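/- arXiv:1202.1816 — 4 statements merged into one kernel-verified Lean document; each statement's English description precedes it below -/
import Mathlib

section
/- If A and B are nonempty subsets of a finite abelian group G, then |A+B| ≥ min{p(G), |A|+|B|-1}. -/
open Pointwise

/-- `p(G)`: the smallest prime divisor of `|G|`, or `∞` if `G` is trivial. -/
noncomputable def pAdd (G : Type*) [AddGroup G] : ℕ∞ :=
  if Nat.card G = 1 then ⊤ else (Nat.card G).minFac

/-- For infinite `G` this still holds: then `Nat.card G = 0`, so `pAdd G = 2`. -/
lemma pAdd_le_minOrder (G : Type*) [AddGroup G] : pAdd G ≤ AddMonoid.minOrder G := by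
  rw [AddMonoid.le_minOrder]
  intro a ha _
  unfold pAdd
  split_ifs with hcard
  · have : Subsingleton G := (Nat.card_eq_one_iff_unique.mp hcard).1
    exact absurd (Subsingleton.elim a 0) ha
  · have htwo : 2 ≤ addOrderOf a := by
      have hpos := addOrderOf_pos_iff.mpr ‹_›
      have hne : addOrderOf a ≠ 1 := mt AddMonoid.addOrderOf_eq_one_iff.mp ha
      omega
    exact_mod_cast Nat.minFac_le_of_dvd htwo (addOrderOf_dvd_natCard a)

theorem karolyi_abelian_general (G : Type*) [AddCommGroup G] [DecidableEq G]
    (A B : Finset G) (hA : A.Nonempty) (hB : B.Nonempty) :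
    min (pAdd G) ((A.card + B.card - 1 : ℕ) : ℕ∞) ≤ ((A + B).card : ℕ∞) :=
  (min_le_min_right _ (pAdd_le_minOrder G)).trans (cauchy_davenport_minOrder_add hA hB)

theorem karolyi_abelian (G : Type*) [AddCommGroup G] [Fintype G] [DecidableEq G]
    (A B : Finset G) (hA : A.Nonempty) (hB : B.Nonempty) :
    min (pAdd G) ((A.card + B.card - 1 : ℕ) : ℕ∞) ≤ ((A + B).card : ℕ∞) :=
  karolyi_abelian_general G A B hA hB
end

section
/- If G is a finite solvable group and A, B are nonempty subsets of G with |A|+|B|-1 ≤ p(G), then |A·B| ≥ |A|+|B|-1. -/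
/-!
In any group, `|A·B| ≥ min (minOrder G) (|A| + |B| - 1)`, where `minOrder G` is the least order
of a nontrivial element (`cauchy_davenport_minOrder_mul`). In a finite group every nontrivial
element has order a divisor `≠ 1` of `|G|`, so `p(G) ≤ minOrder G`.
-/

open Pointwise

/-- `p(G)`: the smallest prime divisor of `|G|`, or `∞` if `G` is trivial. -/
noncomputable def pMul (G : Type*) [Group G] : ℕ∞ :=
  if Nat.card G = 1 then ⊤ else (Nat.card G).minFac

lemma pMul_le_minOrder (G : Type*) [Group G] [Finite G] : pMul G ≤ Monoid.minOrder G := by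
  rw [Monoid.le_minOrder]
  intro a ha _
  have hdvd : orderOf a ∣ Nat.card G := orderOf_dvd_natCard a
  have hne : orderOf a ≠ 1 := mt orderOf_eq_one_iff.mp ha
  unfold pMul
  split_ifs with hG
  · exact absurd (Nat.dvd_one.mp (hG ▸ hdvd)) hne
  · have htwo : 2 ≤ orderOf a := by have := orderOf_pos a; omega
    exact_mod_cast Nat.minFac_le_of_dvd htwo hdvd

theorem cauchy_davenport_solvable_general (G : Type*) [Group G] [Fintype G]
    [DecidableEq G] (A B : Finset G) (hA : A.Nonempty)
    (hB : B.Nonempty) (h : ((A.card + B.card - 1 : ℕ) : ℕ∞) ≤ pMul G) :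
    A.card + B.card - 1 ≤ (A * B).card := by
  have hmin : ((A.card + B.card - 1 : ℕ) : ℕ∞) ≤ Monoid.minOrder G :=
    h.trans (pMul_le_minOrder G)
  have hCD := cauchy_davenport_minOrder_mul hA hB
  rw [min_eq_right hmin] at hCD
  exact_mod_cast hCD

theorem cauchy_davenport_solvable (G : Type*) [Group G] [Fintype G]
    [DecidableEq G] [Group.IsSolvable G] (A B : Finset G) (hA : A.Nonempty)
    (hB : B.Nonempty) (h : ((A.card + B.card - 1 : ℕ) : ℕ∞) ≤ pMul G) :
    A.card + B.card - 1 ≤ (A * B).card :=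
  cauchy_davenport_solvable_general G A B hA hB h
end

section
/- Let A and B be nonempty subsets of Z/pZ with p prime. Then |A ∔ B| ≥ min{p, |A|+|B|-3}, where A ∔ B = {a+b mod p : a ∈ A, b ∈ B, a ≠ b} (Erdős–Heilbronn problem). -/
/-!
Polynomial method of Alon, Nathanson and Ruzsa. Suppose `#A ≠ #B` and the restricted sumset `C`
has fewer than `#A + #B - 2` elements. Take a monic `g` of degree `N = #A + #B - 3` vanishing
on `C`; then `(x - y) * g (x + y)` vanishes on `A × B`. Its coefficient of
`x ^ (#A - 1) * y ^ (#B - 1)`, a monomial of top degree, only sees `(x - y) * (x + y) ^ N` and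
equals `N.choose (#B - 1) - N.choose (#A - 1)`, which is nonzero in `ZMod p` when `N < p`. This
contradicts the Combinatorial Nullstellensatz. The general bound follows by shrinking `A` and `B` to
subsets of distinct sizes with the right total.
-/

open MvPolynomial Finset

theorem Finsupp.single_add_single_inj {σ : Type*} {i j : σ} (hij : i ≠ j) {a b c d : ℕ} :
    single i a + single j b = single i c + single j d ↔ a = c ∧ b = d := by
  refine ⟨fun h ↦ ⟨?_, ?_⟩, fun ⟨rfl, rfl⟩ ↦ rfl⟩
  · simpa [hij] using DFunLike.congr_fun h i
  · simpa [hij.symm] using DFunLike.congr_fun h j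

namespace Polynomial

theorem exists_monic_natDegree_eq_forall_eval_eq_zero {R : Type*} [CommRing R] [Nontrivial R]
    (s : Finset R) {n : ℕ} (hn : #s ≤ n) :
    ∃ g : R[X], g.Monic ∧ g.natDegree = n ∧ ∀ c ∈ s, g.eval c = 0 := by
  refine ⟨X ^ (n - #s) * ∏ c ∈ s, (X - C c), (monic_X_pow _).mul (monic_prod_X_sub_C _ _), ?_,
    fun c hc ↦ ?_⟩
  · rw [(monic_X_pow _).natDegree_mul (monic_prod_X_sub_C _ _), natDegree_X_pow,
      natDegree_finsetProd_X_sub_C_eq_card]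
    omega
  · rw [eval_mul, eval_prod, prod_eq_zero hc (by rw [eval_sub, eval_X, eval_C, sub_self]),
      mul_zero]

end Polynomial

namespace MvPolynomial

variable {σ : Type*}

section CommSemiring

variable {R : Type*} [CommSemiring R]

theorem coeff_mul_aeval_of_isHomogeneous {h s : MvPolynomial σ R} {a : ℕ}
    (hh : h.IsHomogeneous a) (hs : s.IsHomogeneous 1) {g : Polynomial R} (hg : g.Monic)
    {d : σ →₀ ℕ} (hd : d.degree = a + g.natDegree) :
    coeff d (h * Polynomial.aeval s g) = coeff d (h * s ^ g.natDegree) := by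
  rw [Polynomial.aeval_eq_sum_range, mul_sum, coeff_sum,
    sum_eq_single g.natDegree _ (by simp)]
  · rw [mul_smul_comm, coeff_smul, hg.coeff_natDegree, one_smul]
  · intro i _ hi
    rw [mul_smul_comm, coeff_smul, (hh.mul (hs.pow i)).coeff_eq_zero, smul_zero]
    omega

theorem totalDegree_mul_aeval_le {h s : MvPolynomial σ R} {a : ℕ}
    (hh : h.IsHomogeneous a) (hs : s.IsHomogeneous 1) (g : Polynomial R) :
    (h * Polynomial.aeval s g).totalDegree ≤ a + g.natDegree := by
  rw [Polynomial.aeval_eq_sum_range, mul_sum]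
  refine totalDegree_finsetSum_le fun i hi ↦ ?_
  rw [mul_smul_comm]
  refine (totalDegree_smul_le _ _).trans ((hh.mul (hs.pow i)).totalDegree_le.trans ?_)
  simp only [mem_range] at hi
  omega

theorem coeff_X_mul_X_add_X_pow [DecidableEq σ] {i j : σ} (hij : i ≠ j) {k l N : ℕ}
    (hkl : k + l = N + 1) :
    coeff (Finsupp.single i k + Finsupp.single j l) (X j * (X i + X j) ^ N : MvPolynomial σ R) =
      N.choose k := by
  have hmono (m : ℕ) : X j * (X i ^ m * X j ^ (N - m) * (N.choose m : MvPolynomial σ R)) =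
      monomial (Finsupp.single i m + Finsupp.single j (N - m + 1)) (N.choose m : R) := by
    calc _ = C (N.choose m : R) * (X i ^ m * X j ^ (N - m + 1)) := by rw [map_natCast]; ring
      _ = _ := by rw [X_pow_eq_monomial, X_pow_eq_monomial, monomial_mul, C_mul_monomial, mul_one,
        mul_one]
  rw [add_pow, mul_sum, coeff_sum]
  simp_rw [hmono, coeff_monomial, Finsupp.single_add_single_inj hij]
  rw [sum_congr rfl fun m hm ↦ if_congr (show m = k ∧ N - m + 1 = l ↔ m = k by
    simp only [mem_range] at hm; omega) rfl rfl, sum_ite_eq']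
  split_ifs with hk
  · rfl
  · rw [Nat.choose_eq_zero_of_lt (by simpa [Nat.lt_succ_iff] using hk), Nat.cast_zero]

end CommSemiring

section CommRing

variable {R : Type*} [CommRing R]

theorem coeff_X_sub_X_mul_X_add_X_pow [DecidableEq σ] {i j : σ} (hij : i ≠ j) {k l N : ℕ}
    (hkl : k + l = N + 1) :
    coeff (Finsupp.single i k + Finsupp.single j l)
      ((X i - X j) * (X i + X j) ^ N : MvPolynomial σ R) = N.choose l - N.choose k := by
  rw [sub_mul, coeff_sub, coeff_X_mul_X_add_X_pow hij hkl, add_comm (Finsupp.single i k),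
    add_comm (X i), coeff_X_mul_X_add_X_pow hij.symm (by omega)]

theorem eval_X_sub_X_mul_aeval_X_add_X (x : σ → R) (i j : σ) (g : Polynomial R) :
    eval x ((X i - X j) * Polynomial.aeval (X i + X j) g) = (x i - x j) * g.eval (x i + x j) := by
  have h := Polynomial.aeval_algHom_apply (aeval x) (X i + X j) g
  rw [aeval_eq_eval, Polynomial.coe_aeval_eq_eval] at h
  simp [← h]

end CommRing

end MvPolynomial

section RestrictedSumset

variable {α : Type*} [DecidableEq α] [Add α]

def restrictedSumset (A B : Finset α) : Finset α :=
  ((A ×ˢ B).filter (fun ab => ab.1 ≠ ab.2)).image (fun ab => ab.1 + ab.2)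

theorem add_mem_restrictedSumset {A B : Finset α} {a b : α} (ha : a ∈ A) (hb : b ∈ B)
    (hab : a ≠ b) : a + b ∈ restrictedSumset A B :=
  mem_image.mpr ⟨(a, b), mem_filter.mpr ⟨mem_product.mpr ⟨ha, hb⟩, hab⟩, rfl⟩

theorem restrictedSumset_mono {A A' B B' : Finset α} (hA : A' ⊆ A) (hB : B' ⊆ B) :
    restrictedSumset A' B' ⊆ restrictedSumset A B :=
  image_subset_image (filter_subset_filter _ (product_subset_product hA hB))

end RestrictedSumset

theorem card_add_card_sub_two_le_card_restrictedSumset {K : Type*} [CommRing K] [IsDomain K]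
    [DecidableEq K] {A B : Finset K} (hA : A.Nonempty) (hB : B.Nonempty)
    (hchoose : ((#A + #B - 3).choose (#B - 1) : K) ≠ (#A + #B - 3).choose (#A - 1)) :
    #A + #B - 2 ≤ #(restrictedSumset A B) := by
  have hA1 := hA.card_pos
  have hB1 := hB.card_pos
  set N := #A + #B - 3
  have hN : #A - 1 + (#B - 1) = N + 1 := by
    by_contra hN
    exact hchoose (by rw [show #A = 1 by omega, show #B = 1 by omega])
  by_contra! hlt
  obtain ⟨g, hg, hgN, hgC⟩ :=
    Polynomial.exists_monic_natDegree_eq_forall_eval_eq_zero (restrictedSumset A B)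
      (n := N) (by omega)
  set f : MvPolynomial (Fin 2) K := (X 0 - X 1) * Polynomial.aeval (X 0 + X 1) g
  set t : Fin 2 →₀ ℕ := Finsupp.single 0 (#A - 1) + Finsupp.single 1 (#B - 1)
  have hh : (X 0 - X 1 : MvPolynomial (Fin 2) K).IsHomogeneous 1 :=
    (isHomogeneous_X _ _).sub (isHomogeneous_X _ _)
  have hs : (X 0 + X 1 : MvPolynomial (Fin 2) K).IsHomogeneous 1 :=
    (isHomogeneous_X _ _).add (isHomogeneous_X _ _)
  have ht : t.degree = 1 + g.natDegree := by
    simp only [t, map_add, Finsupp.degree_single]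
    omega
  have hft : coeff t f ≠ 0 := by
    rw [coeff_mul_aeval_of_isHomogeneous hh hs hg ht, hgN,
      coeff_X_sub_X_mul_X_add_X_pow (by decide) hN]
    exact sub_ne_zero.mpr hchoose
  have hdeg : f.totalDegree = t.degree :=
    (ht ▸ totalDegree_mul_aeval_le hh hs g).antisymm (le_totalDegree (mem_support_iff.mpr hft))
  obtain ⟨x, hx, hfx⟩ := combinatorial_nullstellensatz_exists_eval_nonzero f t hft hdeg ![A, B]
    (Fin.forall_fin_two.mpr ⟨by simp [t]; omega, by simp [t]; omega⟩)
  apply hfx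
  rw [eval_X_sub_X_mul_aeval_X_add_X]
  by_cases hx01 : x 0 = x 1
  · rw [hx01, sub_self, zero_mul]
  · rw [hgC _ (add_mem_restrictedSumset (hx 0) (hx 1) hx01), mul_zero]

theorem ZMod.natCast_choose_ne_natCast_choose {p k l : ℕ} [Fact p.Prime] (hkl : k ≠ l)
    (hp : k + l ≤ p) : ((k + l - 1).choose l : ZMod p) ≠ (k + l - 1).choose k := by
  wlog hlt : k < l generalizing k l
  · simpa only [add_comm l] using (this hkl.symm (by omega) (by omega)).symm
  obtain rfl | hk := Nat.eq_zero_or_pos k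
  · simp [Nat.choose_eq_zero_of_lt (Nat.sub_lt hlt one_pos)]
  set N := k + l - 1
  have hid : N.choose k * k = N.choose l * l := by
    have h := Nat.choose_succ_right_eq N (k - 1)
    rwa [Nat.sub_add_cancel hk, Nat.choose_symm_of_eq_add (by omega : N = k - 1 + l),
      show N - (k - 1) = l by omega] at h
  have hchoose : (N.choose l : ZMod p) ≠ 0 := by
    rw [Ne, ZMod.natCast_eq_zero_iff]
    exact (Nat.Prime.coprime_iff_not_dvd Fact.out).mp
      (Nat.Prime.coprime_choose_of_lt Fact.out (by omega) (by omega))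
  intro heq
  have hcast : (k : ZMod p) = l := by
    have h := congrArg (Nat.cast : ℕ → ZMod p) hid
    push_cast at h
    rw [← heq] at h
    exact mul_left_cancel₀ hchoose h
  have := congrArg ZMod.val hcast
  rw [ZMod.val_natCast_of_lt (by omega), ZMod.val_natCast_of_lt (by omega)] at this
  exact hkl this

theorem ZMod.card_add_card_sub_two_le_card_restrictedSumset {p : ℕ} [Fact p.Prime]
    {A B : Finset (ZMod p)} (hA : A.Nonempty) (hB : B.Nonempty) (hAB : #A ≠ #B)
    (hp : #A + #B ≤ p + 2) : #A + #B - 2 ≤ #(restrictedSumset A B) := by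
  have hA1 := hA.card_pos
  have hB1 := hB.card_pos
  refine _root_.card_add_card_sub_two_le_card_restrictedSumset hA hB ?_
  have h := ZMod.natCast_choose_ne_natCast_choose (p := p) (k := #A - 1) (l := #B - 1)
    (by omega) (by omega)
  rwa [show #A - 1 + (#B - 1) - 1 = #A + #B - 3 by omega] at h

theorem Finset.exists_subset_subset_card_ne_card_add_eq {α : Type*} {A B : Finset α}
    (hA : A.Nonempty) (hB : B.Nonempty) {s : ℕ} (hs : 3 ≤ s) (hsAB : s < #A + #B) :
    ∃ A' ⊆ A, ∃ B' ⊆ B, A'.Nonempty ∧ B'.Nonempty ∧ #A' ≠ #B' ∧ #A' + #B' = s := by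
  have hA1 := hA.card_pos
  have hB1 := hB.card_pos
  obtain ⟨a, ha1, haA, hbB, hsa⟩ :
      ∃ a, 1 ≤ a ∧ a ≤ #A ∧ s - a ≤ #B ∧ 2 * a ≠ s ∧ a < s := by
    by_cases h : 2 * min #A (s - 1) = s
    · exact ⟨min #A (s - 1) - 1, by omega, by omega, by omega, by omega⟩
    · exact ⟨min #A (s - 1), by omega, by omega, by omega, by omega⟩
  obtain ⟨A', hA', hA'a⟩ := exists_subset_card_eq haA
  obtain ⟨B', hB', hB'b⟩ := exists_subset_card_eq hbB
  exact ⟨A', hA', B', hB', card_pos.mp (by omega), card_pos.mp (by omega), by omega, by omega⟩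

theorem erdos_heilbronn (p : ℕ) (hp : p.Prime) (A B : Finset (ZMod p))
    (hA : A.Nonempty) (hB : B.Nonempty) :
    min p (A.card + B.card - 3) ≤
      (((A ×ˢ B).filter (fun ab => ab.1 ≠ ab.2)).image
        (fun ab => ab.1 + ab.2)).card := by
  have : Fact p.Prime := ⟨hp⟩
  change _ ≤ #(restrictedSumset A B)
  obtain h0 | hpos := Nat.eq_zero_or_pos (min p (#A + #B - 3))
  · exact h0 ▸ Nat.zero_le _
  obtain ⟨A', hA', B', hB', hA'0, hB'0, hne, hcard⟩ :=
    exists_subset_subset_card_ne_card_add_eq hA hB (s := min p (#A + #B - 3) + 2) (by omega)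
      (by omega)
  calc min p (#A + #B - 3) = #A' + #B' - 2 := by omega
    _ ≤ #(restrictedSumset A' B') :=
      ZMod.card_add_card_sub_two_le_card_restrictedSumset hA'0 hB'0 hne (by omega)
    _ ≤ #(restrictedSumset A B) := card_le_card (restrictedSumset_mono hA' hB')
end

section
/- Let G be a finite group of odd order and A, B nonempty subsets of G with |A|+|B|-1 ≤ p(G). Then |A·B| ≥ |A|+|B|-1. -/
open Pointwise

theorem cauchy_davenport_odd_order (G : Type*) [Group G] [Fintype G]
    [DecidableEq G] (hG : Odd (Fintype.card G)) (A B : Finset G)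
    (hA : A.Nonempty) (hB : B.Nonempty)
    (h : ((A.card + B.card - 1 : ℕ) : ℕ∞) ≤ pMul G) :
    A.card + B.card - 1 ≤ (A * B).card := by
  have hmin : pMul G ≤ Monoid.minOrder G := by
    rw [Monoid.le_minOrder]
    intro a ha ha'
    have hcard : Nat.card G ≠ 1 := by
      rw [Nat.card_eq_fintype_card]
      intro h1
      have : Subsingleton G := Fintype.card_le_one_iff_subsingleton.1 h1.le
      exact ha (Subsingleton.elim a 1)
    rw [pMul, if_neg hcard]
    have hdvd : orderOf a ∣ Nat.card G := by
      rw [Nat.card_eq_fintype_card]; exact orderOf_dvd_card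
    have h2 : 2 ≤ orderOf a := Nat.lt_of_le_of_ne (orderOf_pos a) (fun e => ha
      (orderOf_eq_one_iff.1 e.symm)) |>.trans_le le_rfl
    exact_mod_cast Nat.minFac_le_of_dvd h2 hdvd
  have h' : ((A.card + B.card - 1 : ℕ) : ℕ∞) ≤ Monoid.minOrder G := h.trans hmin
  have := cauchy_davenport_minOrder_mul hA hB
  rw [min_eq_right h'] at this
  exact_mod_cast this
end
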